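/- arXiv:1310.7978 — 2 statements merged into one kernel-verified Lean document; each statement's English description precedes it below -/
import Mathlib

section
/- Let a < b, c > 0, h > 0, let V : (a,b) → ℝ be bounded measurable, let ζ ∈ ℂ satisfy Im ζ ≥ 0, Im(ζ²) ≥ 0 and V(x) − Re(ζ²) ≥ c for a.e. x ∈ (a,b), and let f ∈ L²(a,b). If u : [a,b] → ℂ is continuously differentiable with absolutely continuous derivative, satisfies −h²u''(x) + V(x)u(x) − ζ²u(x) = f(x) for a.e. x ∈ (a,b), and obeys h u'(a) + iζ u(a) = 0 and h u'(b) − iζ u(b) = 0, then (∫_a^b |u|² dx + ∫_a^b h²|u'|² dx)^{1/2} ≤ C ‖f‖_{L²(a,b)}, where C > 0 depends only on c (uniformly in h, ζ, V, f, u). -/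
open MeasureTheory Set intervalIntegral
open scoped ENNReal NNReal

lemma mul_contOn_integrable {a b : ℝ} (g k : ℝ → ℂ)
    (hg : Integrable g (volume.restrict (Set.Ioo a b)))
    (hk : ContinuousOn k (Set.Icc a b)) :
    Integrable (fun x => g x * k x) (volume.restrict (Set.Ioo a b)) := by
  obtain ⟨C, hC⟩ := isCompact_Icc.exists_bound_of_continuousOn hk
  have hkm : AEStronglyMeasurable k (volume.restrict (Set.Ioo a b)) :=
    (hk.mono Set.Ioo_subset_Icc_self).aestronglyMeasurable measurableSet_Ioo
  refine (hg.norm.mul_const C).mono' (hg.aestronglyMeasurable.mul hkm) ?_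
  filter_upwards [ae_restrict_mem measurableSet_Ioo] with x hx
  rw [norm_mul]
  exact mul_le_mul_of_nonneg_left (hC x (Set.Ioo_subset_Icc_self hx)) (norm_nonneg _)

lemma hpoint (z : ℂ) : z * (starRingEnd ℂ) z = ((‖z‖ ^ 2 : ℝ) : ℂ) := by
  rw [Complex.mul_conj']; push_cast; ring


/-- Integration by parts where `p x = p a + ∫_a^x P` (P merely integrable) and
`Q` is C¹ on `[a,b]`. -/
lemma ibp_ac {a b : ℝ} (hab : a < b) (P p Q Q' : ℝ → ℂ)
    (hPint : IntegrableOn P (Set.Ioo a b))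
    (hp : ∀ x ∈ Set.Icc a b, p x = p a + ∫ t in a..x, P t)
    (hpc : ContinuousOn p (Set.Icc a b))
    (hQ : ∀ x ∈ Set.Icc a b, HasDerivWithinAt Q (Q' x) (Set.Icc a b) x)
    (hQ'c : ContinuousOn Q' (Set.Icc a b)) :
    ∫ x in Set.Ioo a b, P x * Q x =
      p b * Q b - p a * Q a - ∫ x in Set.Ioo a b, p x * Q' x := by
  set μ := volume.restrict (Set.Ioo a b) with hμ
  have hQc : ContinuousOn Q (Set.Icc a b) := fun x hx => (hQ x hx).continuousWithinAt
  have hQ'int : IntegrableOn Q' (Set.Ioo a b) :=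
    (hQ'c.integrableOn_Icc).mono_set Set.Ioo_subset_Icc_self
  have hpint : IntegrableOn p (Set.Ioo a b) :=
    (hpc.integrableOn_Icc).mono_set Set.Ioo_subset_Icc_self
  -- FTC for Q on [a,x]
  have hQftc : ∀ x ∈ Set.Icc a b, (∫ t in a..x, Q' t) = Q x - Q a := by
    intro x hx
    refine integral_eq_sub_of_hasDeriv_right_of_le hx.1
      (hQc.mono (Set.Icc_subset_Icc_right hx.2)) (fun t ht => ?_) ?_
    · exact ((hQ t ⟨ht.1.le, ht.2.le.trans hx.2⟩).hasDerivAt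
        (Icc_mem_nhds ht.1 (ht.2.trans_le hx.2))).hasDerivWithinAt
    · exact ((hQ'c.mono (Set.Icc_subset_Icc_right hx.2)).intervalIntegrable_of_Icc hx.1)
  have hfin : IsFiniteMeasure μ := by
    constructor
    rw [hμ, Measure.restrict_apply_univ, Real.volume_Ioo]
    exact ENNReal.ofReal_lt_top
  -- bounded-times-integrable helper
  have hbddmul : ∀ (g k : ℝ → ℂ), Integrable g μ → ContinuousOn k (Set.Icc a b) →
      Integrable (fun x => g x * k x) μ := by
    intro g k hg hk
    obtain ⟨C, hC⟩ := isCompact_Icc.exists_bound_of_continuousOn hk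
    have hkm : AEStronglyMeasurable k μ :=
      (hk.mono Set.Ioo_subset_Icc_self).aestronglyMeasurable measurableSet_Ioo
    refine (hg.norm.mul_const C).mono' (hg.aestronglyMeasurable.mul hkm) ?_
    filter_upwards [ae_restrict_mem measurableSet_Ioo] with x hx
    rw [norm_mul]
    exact mul_le_mul_of_nonneg_left (hC x (Set.Ioo_subset_Icc_self hx)) (norm_nonneg _)
  set F : ℝ → ℝ → ℂ := fun x t => if t < x then P x * Q' t else 0 with hF
  have Gint : Integrable (fun z : ℝ × ℝ => P z.1 * Q' z.2) (μ.prod μ) :=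
    hPint.mul_prod hQ'int
  have Find : Integrable (Function.uncurry F) (μ.prod μ) := by
    have heq : Function.uncurry F =
        Set.indicator {z : ℝ × ℝ | z.2 < z.1} (fun z => P z.1 * Q' z.2) := by
      ext z
      simp only [Function.uncurry, hF, Set.indicator_apply, Set.mem_setOf_eq]
    rw [heq]
    exact Gint.indicator (measurableSet_lt measurable_snd measurable_fst)
  have hPab : IntervalIntegrable P volume a b := by
    rw [intervalIntegrable_iff_integrableOn_Ioo_of_le hab.le]
    exact hPint
  have hPIoo : ∀ t ∈ Set.Ioo a b, (∫ x in Set.Ioo t b, P x) = p b - p t := by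
    intro t ht
    have hsub : Set.uIcc a t ⊆ Set.uIcc a b := by
      rw [Set.uIcc_of_le ht.1.le, Set.uIcc_of_le hab.le]
      exact Set.Icc_subset_Icc le_rfl ht.2.le
    have h1 : (∫ x in a..b, P x) - (∫ x in a..t, P x) = ∫ x in t..b, P x :=
      intervalIntegral.integral_interval_sub_left hPab (hPab.mono_set hsub)
    have h2 : (∫ x in a..b, P x) = p b - p a := by
      have := hp b ⟨hab.le, le_rfl⟩; rw [this]; ring
    have h3 : (∫ x in a..t, P x) = p t - p a := by
      have := hp t ⟨ht.1.le, ht.2.le⟩; rw [this]; ring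
    rw [← MeasureTheory.integral_Ioc_eq_integral_Ioo,
      ← intervalIntegral.integral_of_le ht.2.le, ← h1, h2, h3]
    ring
  -- LHS of Fubini
  have hL : ∀ x ∈ Set.Ioo a b, (∫ t, F x t ∂μ) = P x * (Q x - Q a) := by
    intro x hx
    have heq : (fun t => F x t) = Set.indicator (Set.Iio x) (fun t => P x * Q' t) := by
      ext t; simp only [hF, Set.indicator_apply, Set.mem_Iio]
    rw [heq, hμ, MeasureTheory.integral_indicator measurableSet_Iio,
      Measure.restrict_restrict measurableSet_Iio]
    have hset : Set.Iio x ∩ Set.Ioo a b = Set.Ioo a x := by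
      ext t
      simp only [Set.mem_inter_iff, Set.mem_Iio, Set.mem_Ioo]
      exact ⟨fun h => ⟨h.2.1, h.1⟩, fun h => ⟨h.2, h.1, h.2.trans hx.2⟩⟩
    rw [hset, MeasureTheory.integral_const_mul, ← MeasureTheory.integral_Ioc_eq_integral_Ioo,
      ← intervalIntegral.integral_of_le hx.1.le, hQftc x ⟨hx.1.le, hx.2.le⟩]
  -- RHS of Fubini
  have hR : ∀ t ∈ Set.Ioo a b, (∫ x, F x t ∂μ) = (p b - p t) * Q' t := by
    intro t ht
    have heq : (fun x => F x t) = Set.indicator (Set.Ioi t) (fun x => P x * Q' t) := by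
      ext x; simp only [hF, Set.indicator_apply, Set.mem_Ioi]
    rw [heq, hμ, MeasureTheory.integral_indicator measurableSet_Ioi,
      Measure.restrict_restrict measurableSet_Ioi]
    have hset : Set.Ioi t ∩ Set.Ioo a b = Set.Ioo t b := by
      ext x
      simp only [Set.mem_inter_iff, Set.mem_Ioi, Set.mem_Ioo]
      exact ⟨fun h => ⟨h.1, h.2.2⟩, fun h => ⟨h.1, ht.1.trans h.1, h.2⟩⟩
    rw [hset, MeasureTheory.integral_mul_const, hPIoo t ht]
  have hswap := MeasureTheory.integral_integral_swap Find
  -- rewrite both sides of hswap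
  have hLall : (∫ x, ∫ t, F x t ∂μ ∂μ) = ∫ x in Set.Ioo a b, P x * (Q x - Q a) := by
    rw [hμ]
    exact setIntegral_congr_fun measurableSet_Ioo (fun x hx => hL x hx)
  have hRall : (∫ t, ∫ x, F x t ∂μ ∂μ) = ∫ t in Set.Ioo a b, (p b - p t) * Q' t := by
    rw [hμ]
    exact setIntegral_congr_fun measurableSet_Ioo (fun t ht => hR t ht)
  rw [hLall, hRall] at hswap
  -- expand both sides
  have hPQa : Integrable (fun x => P x * Q a) μ := hPint.mul_const _
  have hPQ : Integrable (fun x => P x * Q x) μ := hbddmul P Q hPint hQc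
  have hpQ' : Integrable (fun x => p x * Q' x) μ := hbddmul p Q' hpint hQ'c
  have hQ'i : Integrable Q' μ := hQ'int
  have hintP : (∫ x in Set.Ioo a b, P x) = p b - p a := by
    have h2 := hp b ⟨hab.le, le_rfl⟩
    rw [intervalIntegral.integral_of_le hab.le, MeasureTheory.integral_Ioc_eq_integral_Ioo] at h2
    rw [h2]; ring
  have hintQ' : (∫ x in Set.Ioo a b, Q' x) = Q b - Q a := by
    rw [← MeasureTheory.integral_Ioc_eq_integral_Ioo, ← intervalIntegral.integral_of_le hab.le]
    exact hQftc b ⟨hab.le, le_rfl⟩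
  have hexpL : (∫ x in Set.Ioo a b, P x * (Q x - Q a)) =
      (∫ x in Set.Ioo a b, P x * Q x) - (p b - p a) * Q a := by
    have : (fun x => P x * (Q x - Q a)) = fun x => P x * Q x - P x * Q a := by
      ext x; ring
    rw [this, MeasureTheory.integral_sub hPQ hPQa, MeasureTheory.integral_mul_const, hintP]
  have hexpR : (∫ t in Set.Ioo a b, (p b - p t) * Q' t) =
      p b * (Q b - Q a) - ∫ t in Set.Ioo a b, p t * Q' t := by
    have : (fun t => (p b - p t) * Q' t) = fun t => p b * Q' t - p t * Q' t := by
      ext t; ring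
    rw [this, MeasureTheory.integral_sub (hQ'i.const_mul _) hpQ',
      MeasureTheory.integral_const_mul, hintQ']
  rw [hexpL, hexpR] at hswap
  rw [hμ]
  linear_combination hswap

/-- Uniform resolvent-type energy estimate: under `Im ζ ≥ 0`, `Im ζ² ≥ 0` and
`V − Re ζ² ≥ c` a.e. on `(a,b)`, any solution of the Robin problem
`−h²u'' + Vu − ζ²u = f` satisfies `‖u‖_{H^{1,h}} ≤ C ‖f‖_{L²}`, with `C` depending
only on `c` (uniformly in `a`, `b`, `h`, `ζ`, `V`, `f`, `u`). -/
theorem stmt_2 (c : ℝ) (hc : 0 < c) :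
    ∃ C > 0, ∀ a b : ℝ, a < b → ∀ h : ℝ, 0 < h → ∀ ζ : ℂ,
      0 ≤ ζ.im → 0 ≤ (ζ ^ 2).im →
      ∀ V : ℝ → ℝ, Measurable V → (∃ M, ∀ x ∈ Set.Ioo a b, |V x| ≤ M) →
      (∀ᵐ x ∂(volume.restrict (Set.Ioo a b)), c ≤ V x - (ζ ^ 2).re) →
      ∀ f : ℝ → ℂ, MemLp f 2 (volume.restrict (Set.Ioo a b)) →
      ∀ u u' u'' : ℝ → ℂ,
        (∀ x ∈ Set.Icc a b, HasDerivWithinAt u (u' x) (Set.Icc a b) x) →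
        ContinuousOn u' (Set.Icc a b) →
        IntegrableOn u'' (Set.Ioo a b) →
        (∀ x ∈ Set.Icc a b, u' x = u' a + ∫ t in a..x, u'' t) →
        (∀ᵐ x ∂(volume.restrict (Set.Ioo a b)),
          -(h:ℂ)^2 * u'' x + (V x : ℂ) * u x - ζ^2 * u x = f x) →
        (h:ℂ) * u' a + Complex.I * ζ * u a = 0 →
        (h:ℂ) * u' b - Complex.I * ζ * u b = 0 →
        Real.sqrt ((∫ x in a..b, ‖u x‖^2) + ∫ x in a..b, h^2 * ‖u' x‖^2) ≤
          C * Real.sqrt (∫ x in a..b, ‖f x‖^2) := by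
  refine ⟨(min 1 c)⁻¹, by positivity, ?_⟩
  intro a b hab h hh ζ hζim _hζ2im V hVmeas hVbdd hVc f hf u u' u'' hu hu'c hu''int hu'rep heq hBCa hBCb
  obtain ⟨M, hM⟩ := hVbdd
  haveI hfin : IsFiniteMeasure (volume.restrict (Set.Ioo a b)) := by
    constructor
    rw [Measure.restrict_apply_univ, Real.volume_Ioo]
    exact ENNReal.ofReal_lt_top
  have hucont : ContinuousOn u (Set.Icc a b) := fun x hx => (hu x hx).continuousWithinAt
  set w : ℝ → ℂ := fun x => (starRingEnd ℂ) (u x) with hwdef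
  set w' : ℝ → ℂ := fun x => (starRingEnd ℂ) (u' x) with hw'def
  have hwc : ContinuousOn w (Set.Icc a b) := Complex.continuous_conj.comp_continuousOn hucont
  have hw'c : ContinuousOn w' (Set.Icc a b) := Complex.continuous_conj.comp_continuousOn hu'c
  have hwder : ∀ x ∈ Set.Icc a b, HasDerivWithinAt w (w' x) (Set.Icc a b) x := by
    intro x hx
    simpa [hwdef, hw'def, RCLike.star_def] using (hu x hx).star
  -- integrability
  have huint : Integrable u (volume.restrict (Set.Ioo a b)) :=
    (hucont.integrableOn_Icc).mono_set Set.Ioo_subset_Icc_self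
  have hu'int : Integrable u' (volume.restrict (Set.Ioo a b)) :=
    (hu'c.integrableOn_Icc).mono_set Set.Ioo_subset_Icc_self
  have hfint : Integrable f (volume.restrict (Set.Ioo a b)) := hf.integrable one_le_two
  have hVint : Integrable (fun x => ((V x : ℝ) : ℂ)) (volume.restrict (Set.Ioo a b)) := by
    refine (integrable_const M).mono'
      ((Complex.measurable_ofReal.comp hVmeas).aestronglyMeasurable) ?_
    filter_upwards [ae_restrict_mem measurableSet_Ioo] with x hx
    simpa [Complex.norm_real] using hM x hx
  have hVuw : Integrable (fun x => (V x : ℂ) * u x * w x) (volume.restrict (Set.Ioo a b)) :=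
    mul_contOn_integrable _ w (mul_contOn_integrable _ u hVint hucont) hwc
  have huw : Integrable (fun x => u x * w x) (volume.restrict (Set.Ioo a b)) :=
    mul_contOn_integrable u w huint hwc
  have hu''w : Integrable (fun x => u'' x * w x) (volume.restrict (Set.Ioo a b)) :=
    mul_contOn_integrable u'' w hu''int hwc
  have hu'w' : Integrable (fun x => u' x * w' x) (volume.restrict (Set.Ioo a b)) :=
    mul_contOn_integrable u' w' hu'int hw'c
  have hfw : Integrable (fun x => f x * w x) (volume.restrict (Set.Ioo a b)) :=
    mul_contOn_integrable f w hfint hwc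
  -- integrated equation
  have heqw : (∫ x in Set.Ioo a b, f x * w x) =
      -(h:ℂ)^2 * (∫ x in Set.Ioo a b, u'' x * w x) +
      (∫ x in Set.Ioo a b, (V x : ℂ) * u x * w x) -
      ζ^2 * ∫ x in Set.Ioo a b, u x * w x := by
    have hpt : ∀ᵐ x ∂(volume.restrict (Set.Ioo a b)), f x * w x =
        -(h:ℂ)^2 * (u'' x * w x) + ((V x : ℂ) * u x * w x) - ζ^2 * (u x * w x) :=
      heq.mono (fun x hx => by rw [← hx]; ring)
    have h1 : Integrable (fun x => -(h:ℂ)^2 * (u'' x * w x) + (V x : ℂ) * u x * w x)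
        (volume.restrict (Set.Ioo a b)) := (hu''w.const_mul _).add hVuw
    have h2 : Integrable (fun x => ζ^2 * (u x * w x)) (volume.restrict (Set.Ioo a b)) :=
      huw.const_mul _
    have h3 : Integrable (fun x => -(h:ℂ)^2 * (u'' x * w x)) (volume.restrict (Set.Ioo a b)) :=
      hu''w.const_mul _
    rw [integral_congr_ae hpt, integral_sub h1 h2, integral_add h3 hVuw,
      MeasureTheory.integral_const_mul, MeasureTheory.integral_const_mul]
  -- integration by parts
  have hibp := ibp_ac hab u'' u' w w' hu''int hu'rep hu'c hwder hw'c
  -- real quantities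
  have hRc : (∫ x in Set.Ioo a b, u x * w x) = ((∫ x in Set.Ioo a b, ‖u x‖^2 : ℝ) : ℂ) := by
    exact (integral_congr_ae (Filter.Eventually.of_forall fun x => hpoint (u x))).trans
      _root_.integral_ofReal
  have hSc : (∫ x in Set.Ioo a b, u' x * w' x) = ((∫ x in Set.Ioo a b, ‖u' x‖^2 : ℝ) : ℂ) := by
    exact (integral_congr_ae (Filter.Eventually.of_forall fun x => hpoint (u' x))).trans
      _root_.integral_ofReal
  -- boundary terms
  have hba' : (h:ℂ) * u' a = -(Complex.I * ζ * u a) := by linear_combination hBCa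
  have hbb' : (h:ℂ) * u' b = Complex.I * ζ * u b := by linear_combination hBCb
  have hterm1 : -(h:ℂ)^2 * (u' b * w b - u' a * w a) =
      -Complex.I * h * ζ * ((‖u a‖^2 + ‖u b‖^2 : ℝ) : ℂ) := by
    have e1 : -(h:ℂ)^2 * (u' b * w b - u' a * w a) =
        -(h:ℂ) * (((h:ℂ) * u' b) * w b) + (h:ℂ) * (((h:ℂ) * u' a) * w a) := by ring
    rw [e1, hba', hbb']
    have e2 : u a * w a = ((‖u a‖^2 : ℝ) : ℂ) := hpoint (u a)
    have e3 : u b * w b = ((‖u b‖^2 : ℝ) : ℂ) := hpoint (u b)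
    push_cast at e2 e3 ⊢
    linear_combination (-Complex.I * h * ζ) * e3 + (-Complex.I * h * ζ) * e2
  -- the V - ζ² term
  have hTC : (∫ x in Set.Ioo a b, (V x : ℂ) * u x * w x) -
      ζ^2 * (∫ x in Set.Ioo a b, u x * w x) =
      ∫ x in Set.Ioo a b, ((V x : ℂ) - ζ^2) * ((‖u x‖^2 : ℝ) : ℂ) := by
    rw [← MeasureTheory.integral_const_mul, ← integral_sub hVuw (huw.const_mul _)]
    refine integral_congr_ae (Filter.Eventually.of_forall fun x => ?_)
    show (V x : ℂ) * u x * w x - ζ^2 * (u x * w x) = ((V x : ℂ) - ζ^2) * ((‖u x‖^2 : ℝ) : ℂ)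
    rw [← hpoint (u x)]; ring
  have hTCint : Integrable (fun x => ((V x : ℂ) - ζ^2) * ((‖u x‖^2 : ℝ) : ℂ))
      (volume.restrict (Set.Ioo a b)) := by
    have hsub : Integrable (fun x => (V x : ℂ) * u x * w x - ζ^2 * (u x * w x))
        (volume.restrict (Set.Ioo a b)) := hVuw.sub (huw.const_mul (ζ^2))
    refine hsub.congr (Filter.Eventually.of_forall fun x => ?_)
    show (V x : ℂ) * u x * w x - ζ^2 * (u x * w x) = ((V x : ℂ) - ζ^2) * ((‖u x‖^2 : ℝ) : ℂ)
    rw [← hpoint (u x)]; ring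
  -- key complex identity
  have hkey : (∫ x in Set.Ioo a b, f x * w x) =
      -Complex.I * h * ζ * ((‖u a‖^2 + ‖u b‖^2 : ℝ) : ℂ) +
      ((h^2 * ∫ x in Set.Ioo a b, ‖u' x‖^2 : ℝ) : ℂ) +
      ∫ x in Set.Ioo a b, ((V x : ℂ) - ζ^2) * ((‖u x‖^2 : ℝ) : ℂ) := by
    rw [heqw, hibp]
    rw [← hTC]
    rw [mul_sub, ← hterm1]
    push_cast
    rw [hSc]
    push_cast
    ring
  -- nonnegativity
  have hRnn : 0 ≤ ∫ x in Set.Ioo a b, ‖u x‖^2 :=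
    integral_nonneg (fun x => sq_nonneg _)
  have hSnn : 0 ≤ ∫ x in Set.Ioo a b, ‖u' x‖^2 :=
    integral_nonneg (fun x => sq_nonneg _)
  have hBnn : 0 ≤ ‖u a‖^2 + ‖u b‖^2 := by positivity
  -- real part of the V-ζ² term
  have hreT : (∫ x in Set.Ioo a b, ((V x : ℂ) - ζ^2) * ((‖u x‖^2 : ℝ) : ℂ)).re =
      ∫ x in Set.Ioo a b, (V x - (ζ^2).re) * ‖u x‖^2 := by
    have h0 := integral_re hTCint
    simp only [RCLike.re_to_complex] at h0
    rw [← h0]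
    refine integral_congr_ae (Filter.Eventually.of_forall fun x => ?_)
    simp [Complex.mul_re, Complex.sub_re, Complex.sub_im, Complex.ofReal_re, Complex.ofReal_im,
      ← Complex.ofReal_pow]
  have hnu2 : Integrable (fun x => ‖u x‖^2) (volume.restrict (Set.Ioo a b)) :=
    ((hucont.norm.pow 2).integrableOn_Icc).mono_set Set.Ioo_subset_Icc_self
  have hreTint : Integrable (fun x => (V x - (ζ^2).re) * ‖u x‖^2)
      (volume.restrict (Set.Ioo a b)) := by
    refine hTCint.re.congr (Filter.Eventually.of_forall fun x => ?_)
    simp [Complex.mul_re, Complex.sub_re, Complex.sub_im, Complex.ofReal_re, Complex.ofReal_im,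
      ← Complex.ofReal_pow]
  have hTge : c * (∫ x in Set.Ioo a b, ‖u x‖^2) ≤
      ∫ x in Set.Ioo a b, (V x - (ζ^2).re) * ‖u x‖^2 := by
    rw [← MeasureTheory.integral_const_mul]
    refine integral_mono_ae (hnu2.const_mul c) hreTint ?_
    filter_upwards [hVc] with x hx
    exact mul_le_mul_of_nonneg_right hx (sq_nonneg _)
  -- boundary term real part
  have hterm1re : (-Complex.I * (h:ℂ) * ζ * ((‖u a‖^2 + ‖u b‖^2 : ℝ) : ℂ)).re =
      h * ζ.im * (‖u a‖^2 + ‖u b‖^2) := by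
    simp [Complex.mul_re, Complex.mul_im, Complex.I_re, Complex.I_im,
      Complex.ofReal_re, Complex.ofReal_im, ← Complex.ofReal_pow]
    try ring
  -- lower bound on the real part
  have hlow : min 1 c * ((∫ x in Set.Ioo a b, ‖u x‖^2) +
      h^2 * ∫ x in Set.Ioo a b, ‖u' x‖^2) ≤ (∫ x in Set.Ioo a b, f x * w x).re := by
    have hre := congrArg Complex.re hkey
    rw [Complex.add_re, Complex.add_re, hterm1re, Complex.ofReal_re, hreT] at hre
    rw [hre]
    nlinarith [mul_nonneg (sub_nonneg.2 (min_le_right 1 c)) hRnn,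
      mul_nonneg (sub_nonneg.2 (min_le_left 1 c)) (mul_nonneg (sq_nonneg h) hSnn),
      mul_nonneg (mul_nonneg hh.le hζim) hBnn, hTge]
  -- upper bound via Cauchy-Schwarz
  have hup : (∫ x in Set.Ioo a b, f x * w x).re ≤
      Real.sqrt (∫ x in Set.Ioo a b, ‖f x‖^2) * Real.sqrt (∫ x in Set.Ioo a b, ‖u x‖^2) := by
    have h1 : (∫ x in Set.Ioo a b, f x * w x).re ≤ ‖∫ x in Set.Ioo a b, f x * w x‖ :=
      Complex.re_le_norm _
    have h2 : ‖∫ x in Set.Ioo a b, f x * w x‖ ≤ ∫ x in Set.Ioo a b, ‖f x * w x‖ :=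
      norm_integral_le_integral_norm _
    have h3 : (∫ x in Set.Ioo a b, ‖f x * w x‖) = ∫ x in Set.Ioo a b, ‖f x‖ * ‖u x‖ := by
      refine integral_congr_ae (Filter.Eventually.of_forall fun x => ?_)
      show ‖f x * w x‖ = ‖f x‖ * ‖u x‖
      rw [norm_mul]
      simp [hwdef]
    have hpq : Real.HolderConjugate 2 2 := Real.HolderConjugate.two_two
    have h2e : ENNReal.ofReal (2:ℝ) = (2 : ℝ≥0∞) := by
      simp [ENNReal.ofReal_ofNat]
    have hmf : MemLp (fun x => ‖f x‖) (ENNReal.ofReal 2) (volume.restrict (Set.Ioo a b)) := by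
      rw [h2e]; exact hf.norm
    obtain ⟨Ku, hKu⟩ := isCompact_Icc.exists_bound_of_continuousOn hucont
    have hmu : MemLp (fun x => ‖u x‖) (ENNReal.ofReal 2) (volume.restrict (Set.Ioo a b)) := by
      refine MemLp.of_bound
        (((hucont.norm).mono Set.Ioo_subset_Icc_self).aestronglyMeasurable measurableSet_Ioo)
        Ku ?_
      filter_upwards [ae_restrict_mem measurableSet_Ioo] with x hx
      simpa using hKu x (Set.Ioo_subset_Icc_self hx)
    have hcs := integral_mul_le_Lp_mul_Lq_of_nonneg hpq
      (Filter.Eventually.of_forall fun x => norm_nonneg (f x))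
      (Filter.Eventually.of_forall fun x => norm_nonneg (u x)) hmf hmu
    have hr2 : ∀ r : ℝ, r ^ (2:ℝ) = r ^ 2 := fun r => by
      rw [show (2:ℝ) = ((2:ℕ):ℝ) by norm_num, Real.rpow_natCast]
    simp only [hr2] at hcs
    rw [← Real.sqrt_eq_rpow, ← Real.sqrt_eq_rpow] at hcs
    exact h1.trans (h2.trans (h3.trans_le hcs))
  -- convert interval integrals
  have g1 : (∫ x in a..b, ‖u x‖^2) = ∫ x in Set.Ioo a b, ‖u x‖^2 := by
    rw [intervalIntegral.integral_of_le hab.le, MeasureTheory.integral_Ioc_eq_integral_Ioo]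
  have g2 : (∫ x in a..b, h^2 * ‖u' x‖^2) = h^2 * ∫ x in Set.Ioo a b, ‖u' x‖^2 := by
    rw [intervalIntegral.integral_const_mul, intervalIntegral.integral_of_le hab.le,
      MeasureTheory.integral_Ioc_eq_integral_Ioo]
  have g3 : (∫ x in a..b, ‖f x‖^2) = ∫ x in Set.Ioo a b, ‖f x‖^2 := by
    rw [intervalIntegral.integral_of_le hab.le, MeasureTheory.integral_Ioc_eq_integral_Ioo]
  rw [g1, g2, g3]
  -- final algebra
  set R := ∫ x in Set.Ioo a b, ‖u x‖^2 with hRdef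
  set S := ∫ x in Set.Ioo a b, ‖u' x‖^2 with hSdef
  set F2 := ∫ x in Set.Ioo a b, ‖f x‖^2 with hF2def
  have hEnn : 0 ≤ R + h^2 * S := by positivity
  have hm : 0 < min 1 c := lt_min one_pos hc
  have hchain : min 1 c * (R + h^2 * S) ≤ Real.sqrt F2 * Real.sqrt (R + h^2 * S) := by
    refine hlow.trans (hup.trans ?_)
    refine mul_le_mul_of_nonneg_left ?_ (Real.sqrt_nonneg _)
    exact Real.sqrt_le_sqrt (by nlinarith)
  rcases eq_or_lt_of_le (Real.sqrt_nonneg (R + h^2 * S)) with hE0 | hEpos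
  · rw [← hE0]
    positivity
  · have hstep : min 1 c * Real.sqrt (R + h^2 * S) ≤ Real.sqrt F2 := by
      refine le_of_mul_le_mul_right ?_ hEpos
      calc min 1 c * Real.sqrt (R + h^2 * S) * Real.sqrt (R + h^2 * S)
          = min 1 c * (R + h^2 * S) := by
            rw [mul_assoc, Real.mul_self_sqrt hEnn]
        _ ≤ Real.sqrt F2 * Real.sqrt (R + h^2 * S) := hchain
    calc Real.sqrt (R + h^2 * S)
        = (min 1 c)⁻¹ * (min 1 c * Real.sqrt (R + h^2 * S)) := by
          field_simp
      _ ≤ (min 1 c)⁻¹ * Real.sqrt F2 :=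
          mul_le_mul_of_nonneg_left hstep (inv_nonneg.2 hm.le)
end

section
/- Let a < b, c > 0, let V ∈ L^∞(ℝ,ℝ) have support contained in [a,b]. There exist h₀ > 0 and C > 0, depending only on a, b, c and ‖V‖_∞, such that for every h ∈ (0,h₀], every k ∈ Ω_c(V), and every pair of Jost solutions χ₊(·,k), χ₋(·,k) with Wronskian w^h(k): |w^h(k)| ≤ C h^{−3/2} (1 + |k|) · (∫_a^b |χ₊(x,k)|² dx + ∫_a^b h²|∂_x χ₊(x,k)|² dx)^{1/2}, and the same bound holds with χ₊ replaced by χ₋. -/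
open MeasureTheory

/-- `Ω_c(V) = {k ∈ ℝ : ess inf_{[a,b]} V − k² > c}`. -/
noncomputable def Omega (a b c : ℝ) (V : ℝ → ℝ) : Set ℝ :=
  {k : ℝ | c < essInf V (volume.restrict (Set.Icc a b)) - k ^ 2}

open intervalIntegral Set Filter

lemma loc_ii {f : ℝ → ℂ} (hf : LocallyIntegrable f volume) (x y : ℝ) :
    IntervalIntegrable f volume x y := by
  rw [intervalIntegrable_iff]
  exact (hf.integrableOn_isCompact isCompact_uIcc).mono_set Set.Ioc_subset_Icc_self

lemma aux_cs {f : ℝ → ℝ} {α δ : ℝ} (hαδ : α ≤ δ) (h0 : ∀ x, 0 ≤ f x)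
    (hf : IntervalIntegrable f volume α δ)
    (hf2 : IntervalIntegrable (fun x => f x ^ 2) volume α δ) :
    (∫ x in α..δ, f x) ≤ Real.sqrt (δ - α) * Real.sqrt (∫ x in α..δ, f x ^ 2) := by
  set I := ∫ x in α..δ, f x ^ 2 with hIdef
  have hI0 : 0 ≤ I := intervalIntegral.integral_nonneg hαδ (fun u _ => sq_nonneg _)
  have hδα : 0 ≤ δ - α := by linarith
  have key : ∀ s : ℝ, 0 < s → (∫ x in α..δ, f x) ≤ s * I + (δ - α) / (4 * s) := by
    intro s hs
    have step : (∫ x in α..δ, f x) ≤ ∫ x in α..δ, (s * f x ^ 2 + 1 / (4 * s)) := by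
      apply intervalIntegral.integral_mono_on hαδ hf
        ((hf2.const_mul s).add intervalIntegrable_const)
      intro x _
      rw [← sub_nonneg]
      have hrw : s * f x ^ 2 + 1 / (4 * s) - f x = (2 * s * f x - 1) ^ 2 / (4 * s) := by
        field_simp; ring
      rw [hrw]; positivity
    have hval : (∫ x in α..δ, (s * f x ^ 2 + 1 / (4 * s)))
        = s * I + (δ - α) * (1 / (4 * s)) := by
      rw [intervalIntegral.integral_add (hf2.const_mul s) intervalIntegrable_const,
        intervalIntegral.integral_const_mul, intervalIntegral.integral_const]
      simp [smul_eq_mul]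
      exact Or.inl hIdef.symm
    rw [hval] at step
    calc (∫ x in α..δ, f x) ≤ s * I + (δ - α) * (1 / (4 * s)) := step
      _ = s * I + (δ - α) / (4 * s) := by ring
  rcases eq_or_lt_of_le hI0 with hI | hI
  · have hle : (∫ x in α..δ, f x) ≤ 0 := by
      apply le_of_forall_pos_le_add
      intro ε hε
      have hs : (0:ℝ) < (δ - α) / (4 * ε) + 1 := by positivity
      have hkey := key _ hs
      rw [← hI] at hkey
      have h2 : (δ - α) / (4 * ((δ - α) / (4 * ε) + 1)) ≤ ε := by
        rw [div_le_iff₀ (by positivity)]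
        have hrw : ε * (4 * ((δ - α) / (4 * ε) + 1)) = (δ - α) + 4 * ε := by
          field_simp
        rw [hrw]; linarith
      simpa using hkey.trans (by linarith)
    have : 0 ≤ Real.sqrt (δ - α) * Real.sqrt I := by positivity
    linarith
  · set A := Real.sqrt (δ - α) with hA
    set B := Real.sqrt I with hB
    have hBpos : 0 < B := Real.sqrt_pos.mpr hI
    have hA0 : 0 ≤ A := Real.sqrt_nonneg _
    have hAsq : A ^ 2 = δ - α := Real.sq_sqrt hδα
    have hBsq : B ^ 2 = I := Real.sq_sqrt hI0
    rcases eq_or_lt_of_le hA0 with hA0' | hApos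
    · have hδα' : δ = α := by nlinarith [hAsq]
      subst hδα'
      simp only [intervalIntegral.integral_same]
      positivity
    · have hs : (0:ℝ) < A / (2 * B) := by positivity
      have hkey := key _ hs
      have heq : (A / (2 * B)) * I + (δ - α) / (4 * (A / (2 * B))) = A * B := by
        rw [← hAsq, ← hBsq]; field_simp; ring
      exact le_of_le_of_eq hkey heq

lemma aux_trace_left {v w : ℝ → ℂ} {α β h : ℝ} (hh : 0 < h) (hwin : α + h ≤ β)
    (hv : Continuous v) (hwl : LocallyIntegrable w volume)
    (hw2 : IntervalIntegrable (fun x => ‖w x‖ ^ 2) volume α β)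
    (hrep : ∀ x, v x = v α + ∫ t in α..x, w t) :
    ‖v α‖ * Real.sqrt h ≤ Real.sqrt (∫ x in α..β, ‖v x‖ ^ 2)
      + h * Real.sqrt (∫ x in α..β, ‖w x‖ ^ 2) := by
  have hαβ : α ≤ β := by linarith
  have hαh : α ≤ α + h := by linarith
  set K := ∫ t in α..(α + h), ‖w t‖ with hK
  -- step 1 : h * ‖v α‖ ≤ ∫ norm v over window + h * K
  have hwn : ∀ x y : ℝ, IntervalIntegrable (fun t => ‖w t‖) volume x y :=
    fun x y => (loc_ii hwl x y).norm
  have step1 : h * ‖v α‖ ≤ (∫ x in α..(α + h), ‖v x‖) + h * K := by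
    have hpt : ∀ x ∈ Icc α (α + h), ‖v α‖ ≤ ‖v x‖ + K := by
      intro x hx
      have hxe : v α = v x - ∫ t in α..x, w t := by rw [hrep x]; ring
      have h1 : ‖v α‖ ≤ ‖v x‖ + ‖∫ t in α..x, w t‖ := by
        rw [hxe]; exact norm_sub_le _ _
      have h2 : ‖∫ t in α..x, w t‖ ≤ ∫ t in α..x, ‖w t‖ :=
        intervalIntegral.norm_integral_le_integral_norm hx.1
      have h3 : (∫ t in α..x, ‖w t‖) ≤ K := by
        apply intervalIntegral.integral_mono_interval le_rfl hx.1 hx.2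
        · exact Filter.Eventually.of_forall (fun t => norm_nonneg _)
        · exact hwn _ _
      linarith
    have hconst : (∫ _ in α..(α + h), ‖v α‖) = h * ‖v α‖ := by
      rw [intervalIntegral.integral_const]; simp [smul_eq_mul]
    have hmono : (∫ _ in α..(α + h), ‖v α‖) ≤ ∫ x in α..(α + h), (‖v x‖ + K) := by
      apply intervalIntegral.integral_mono_on hαh intervalIntegrable_const
        ((hv.norm.intervalIntegrable _ _).add intervalIntegrable_const)
      exact hpt
    have hsum : (∫ x in α..(α + h), (‖v x‖ + K)) = (∫ x in α..(α + h), ‖v x‖) + h * K := by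
      rw [intervalIntegral.integral_add (hv.norm.intervalIntegrable _ _) intervalIntegrable_const,
        intervalIntegral.integral_const]
      simp [smul_eq_mul]
    rw [hconst, hsum] at hmono
    exact hmono
  -- step 2 : Cauchy-Schwarz on the window, then enlarge
  have hsq_mono : ∀ g : ℝ → ℝ, (∀ x, 0 ≤ g x) → IntervalIntegrable g volume α β →
      (∫ x in α..(α + h), g x) ≤ ∫ x in α..β, g x := by
    intro g hg hgi
    apply intervalIntegral.integral_mono_interval le_rfl hαh hwin
    · exact Filter.Eventually.of_forall (fun t => hg t)
    · exact hgi
  have hv2 : IntervalIntegrable (fun x => ‖v x‖ ^ 2) volume α β :=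
    ((hv.norm.pow 2).intervalIntegrable _ _)
  have cs_v : (∫ x in α..(α + h), ‖v x‖) ≤
      Real.sqrt h * Real.sqrt (∫ x in α..β, ‖v x‖ ^ 2) := by
    have := aux_cs hαh (fun x => norm_nonneg (v x)) (hv.norm.intervalIntegrable _ _)
      ((hv.norm.pow 2).intervalIntegrable _ _)
    simp only [add_sub_cancel_left] at this
    refine this.trans ?_
    apply mul_le_mul_of_nonneg_left _ (Real.sqrt_nonneg _)
    exact Real.sqrt_le_sqrt (hsq_mono _ (fun x => sq_nonneg _) hv2)
  have cs_w : K ≤ Real.sqrt h * Real.sqrt (∫ x in α..β, ‖w x‖ ^ 2) := by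
    have := aux_cs hαh (fun x => norm_nonneg (w x)) (hwn _ _)
      (hw2.mono_set (by rw [Set.uIcc_of_le hαh, Set.uIcc_of_le hαβ]; exact Icc_subset_Icc le_rfl hwin))
    simp only [add_sub_cancel_left] at this
    refine this.trans ?_
    apply mul_le_mul_of_nonneg_left _ (Real.sqrt_nonneg _)
    exact Real.sqrt_le_sqrt (hsq_mono _ (fun x => sq_nonneg _) hw2)
  -- combine
  have hs : Real.sqrt h > 0 := Real.sqrt_pos.mpr hh
  have hhs : Real.sqrt h * Real.sqrt h = h := Real.mul_self_sqrt hh.le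
  set Pv := Real.sqrt (∫ x in α..β, ‖v x‖ ^ 2)
  set Pw := Real.sqrt (∫ x in α..β, ‖w x‖ ^ 2)
  have hfin : h * ‖v α‖ ≤ Real.sqrt h * Pv + h * (Real.sqrt h * Pw) := by
    have hK' : h * K ≤ h * (Real.sqrt h * Pw) := mul_le_mul_of_nonneg_left cs_w hh.le
    linarith
  have : Real.sqrt h * (‖v α‖ * Real.sqrt h) ≤ Real.sqrt h * (Pv + h * Pw) := by
    calc Real.sqrt h * (‖v α‖ * Real.sqrt h) = h * ‖v α‖ := by
          rw [show Real.sqrt h * (‖v α‖ * Real.sqrt h) = (Real.sqrt h * Real.sqrt h) * ‖v α‖ by ring, hhs]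
      _ ≤ Real.sqrt h * Pv + h * (Real.sqrt h * Pw) := hfin
      _ = Real.sqrt h * (Pv + h * Pw) := by ring
  exact le_of_mul_le_mul_left this hs

lemma aux_trace_right {v w : ℝ → ℂ} {α β h : ℝ} (hh : 0 < h) (hwin : α ≤ β - h)
    (hv : Continuous v) (hwl : LocallyIntegrable w volume)
    (hw2 : IntervalIntegrable (fun x => ‖w x‖ ^ 2) volume α β)
    (hrep : ∀ x, v x = v α + ∫ t in α..x, w t) :
    ‖v β‖ * Real.sqrt h ≤ Real.sqrt (∫ x in α..β, ‖v x‖ ^ 2)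
      + h * Real.sqrt (∫ x in α..β, ‖w x‖ ^ 2) := by
  have hαβ : α ≤ β := by linarith
  have hβh : β - h ≤ β := by linarith
  set K := ∫ t in (β - h)..β, ‖w t‖ with hK
  have hwn : ∀ x y : ℝ, IntervalIntegrable (fun t => ‖w t‖) volume x y :=
    fun x y => (loc_ii hwl x y).norm
  have hrep' : ∀ x, v β = v x + ∫ t in x..β, w t := by
    intro x
    have hadd := intervalIntegral.integral_add_adjacent_intervals
      (loc_ii hwl α x) (loc_ii hwl x β)
    rw [hrep β, hrep x, ← hadd]; ring
  have step1 : h * ‖v β‖ ≤ (∫ x in (β - h)..β, ‖v x‖) + h * K := by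
    have hpt : ∀ x ∈ Icc (β - h) β, ‖v β‖ ≤ ‖v x‖ + K := by
      intro x hx
      have h1 : ‖v β‖ ≤ ‖v x‖ + ‖∫ t in x..β, w t‖ := by
        rw [hrep' x]; exact norm_add_le _ _
      have h2 : ‖∫ t in x..β, w t‖ ≤ ∫ t in x..β, ‖w t‖ :=
        intervalIntegral.norm_integral_le_integral_norm hx.2
      have h3 : (∫ t in x..β, ‖w t‖) ≤ K := by
        apply intervalIntegral.integral_mono_interval hx.1 hx.2 le_rfl
        · exact Filter.Eventually.of_forall (fun t => norm_nonneg _)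
        · exact hwn _ _
      linarith
    have hconst : (∫ _ in (β - h)..β, ‖v β‖) = h * ‖v β‖ := by
      rw [intervalIntegral.integral_const]; simp [smul_eq_mul, sub_sub_cancel]
    have hmono : (∫ _ in (β - h)..β, ‖v β‖) ≤ ∫ x in (β - h)..β, (‖v x‖ + K) := by
      apply intervalIntegral.integral_mono_on hβh intervalIntegrable_const
        ((hv.norm.intervalIntegrable _ _).add intervalIntegrable_const)
      exact hpt
    have hsum : (∫ x in (β - h)..β, (‖v x‖ + K)) = (∫ x in (β - h)..β, ‖v x‖) + h * K := by
      rw [intervalIntegral.integral_add (hv.norm.intervalIntegrable _ _) intervalIntegrable_const,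
        intervalIntegral.integral_const]
      simp [smul_eq_mul, sub_sub_cancel]
    rw [hconst, hsum] at hmono
    exact hmono
  have hsq_mono : ∀ g : ℝ → ℝ, (∀ x, 0 ≤ g x) → IntervalIntegrable g volume α β →
      (∫ x in (β - h)..β, g x) ≤ ∫ x in α..β, g x := by
    intro g hg hgi
    apply intervalIntegral.integral_mono_interval hwin hβh le_rfl
    · exact Filter.Eventually.of_forall (fun t => hg t)
    · exact hgi
  have hv2 : IntervalIntegrable (fun x => ‖v x‖ ^ 2) volume α β :=
    ((hv.norm.pow 2).intervalIntegrable _ _)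
  have cs_v : (∫ x in (β - h)..β, ‖v x‖) ≤
      Real.sqrt h * Real.sqrt (∫ x in α..β, ‖v x‖ ^ 2) := by
    have := aux_cs hβh (fun x => norm_nonneg (v x)) (hv.norm.intervalIntegrable _ _)
      ((hv.norm.pow 2).intervalIntegrable _ _)
    simp only [sub_sub_cancel] at this
    refine this.trans ?_
    apply mul_le_mul_of_nonneg_left _ (Real.sqrt_nonneg _)
    exact Real.sqrt_le_sqrt (hsq_mono _ (fun x => sq_nonneg _) hv2)
  have cs_w : K ≤ Real.sqrt h * Real.sqrt (∫ x in α..β, ‖w x‖ ^ 2) := by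
    have := aux_cs hβh (fun x => norm_nonneg (w x)) (hwn _ _)
      (hw2.mono_set (by rw [Set.uIcc_of_le hβh, Set.uIcc_of_le hαβ]; exact Icc_subset_Icc hwin le_rfl))
    simp only [sub_sub_cancel] at this
    refine this.trans ?_
    apply mul_le_mul_of_nonneg_left _ (Real.sqrt_nonneg _)
    exact Real.sqrt_le_sqrt (hsq_mono _ (fun x => sq_nonneg _) hw2)
  have hs : Real.sqrt h > 0 := Real.sqrt_pos.mpr hh
  have hhs : Real.sqrt h * Real.sqrt h = h := Real.mul_self_sqrt hh.le
  set Pv := Real.sqrt (∫ x in α..β, ‖v x‖ ^ 2)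
  set Pw := Real.sqrt (∫ x in α..β, ‖w x‖ ^ 2)
  have hfin : h * ‖v β‖ ≤ Real.sqrt h * Pv + h * (Real.sqrt h * Pw) := by
    have hK' : h * K ≤ h * (Real.sqrt h * Pw) := mul_le_mul_of_nonneg_left cs_w hh.le
    linarith
  have : Real.sqrt h * (‖v β‖ * Real.sqrt h) ≤ Real.sqrt h * (Pv + h * Pw) := by
    calc Real.sqrt h * (‖v β‖ * Real.sqrt h) = h * ‖v β‖ := by
          rw [show Real.sqrt h * (‖v β‖ * Real.sqrt h) = (Real.sqrt h * Real.sqrt h) * ‖v β‖ by ring, hhs]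
      _ ≤ Real.sqrt h * Pv + h * (Real.sqrt h * Pw) := hfin
      _ = Real.sqrt h * (Pv + h * Pw) := by ring
  exact le_of_mul_le_mul_left this hs

lemma aux_parts {f f' g' φ : ℝ → ℂ} {α β : ℝ} (hαβ : α ≤ β)
    (hf : ∀ x, HasDerivAt f (f' x) x) (hf' : Continuous f')
    (hφ : LocallyIntegrable φ volume)
    (hg : ∀ x, g' x = g' 0 + ∫ t in (0:ℝ)..x, φ t) :
    (∫ x in α..β, f' x * g' x) = f β * g' β - f α * g' α - ∫ x in α..β, f x * φ x := by
  have hfc : Continuous f := by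
    rw [continuous_iff_continuousAt]; exact fun x => (hf x).continuousAt
  have hrep : ∀ x, g' x = g' α + ∫ t in α..x, φ t := by
    intro x
    have hadd := intervalIntegral.integral_add_adjacent_intervals
      (loc_ii hφ 0 α) (loc_ii hφ α x)
    rw [hg x, hg α, ← hadd]; ring
  have hg'cont : Continuous g' := by
    have := intervalIntegral.continuous_primitive (fun x y => loc_ii hφ x y) α
    have h2 : Continuous fun x => g' α + ∫ t in α..x, φ t := continuous_const.add this
    exact h2.congr (fun x => (hrep x).symm)
  -- the measure
  set μ := volume.restrict (Ioc α β) with hμ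
  have hμfin : IsFiniteMeasure μ := by
    constructor
    rw [hμ, Measure.restrict_apply_univ]
    exact measure_Ioc_lt_top
  -- G : the triangle integrand
  set G : ℝ → ℝ → ℂ := fun x t => if t ≤ x then f' x * φ t else 0 with hG
  -- bound for f'
  obtain ⟨C, hC⟩ := (isCompact_Icc (a := α) (b := β)).exists_bound_of_continuousOn
    hf'.continuousOn
  -- integrability of uncurried G
  have hφint : Integrable φ μ := (loc_ii hφ α β).1
  have hf'int : Integrable f' μ := (hf'.intervalIntegrable α β).1
  have hGint : Integrable (Function.uncurry G) (μ.prod μ) := by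
    have hbase : Integrable (fun p : ℝ × ℝ => f' p.1 * φ p.2) (μ.prod μ) :=
      hf'int.mul_prod hφint
    have hS : MeasurableSet {p : ℝ × ℝ | p.2 ≤ p.1} :=
      (isClosed_le continuous_snd continuous_fst).measurableSet
    have : Function.uncurry G = {p : ℝ × ℝ | p.2 ≤ p.1}.indicator
        (fun p : ℝ × ℝ => f' p.1 * φ p.2) := by
      funext p
      by_cases hp : p.2 ≤ p.1
      · simp [Function.uncurry, hG, hp, Set.indicator_of_mem, Set.mem_setOf_eq]
      · simp [Function.uncurry, hG, hp, Set.indicator_of_notMem, Set.mem_setOf_eq]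
    rw [this]
    exact hbase.indicator hS
  -- Fubini
  have hswap := MeasureTheory.integral_integral_swap hGint
  -- identify LHS of swap with T
  have hT : (∫ x, ∫ t, G x t ∂μ ∂μ) = ∫ x in α..β, f' x * (∫ t in α..x, φ t) := by
    rw [intervalIntegral.integral_of_le hαβ]
    apply setIntegral_congr_fun measurableSet_Ioc
    intro x hx
    show (∫ t, G x t ∂μ) = f' x * ∫ t in α..x, φ t
    have h1 : (∫ t, G x t ∂μ) = ∫ t in Ioc α β, (Iic x).indicator (fun t => f' x * φ t) t := by
      apply setIntegral_congr_fun measurableSet_Ioc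
      intro t _
      by_cases ht : t ≤ x
      · simp [hG, ht, Set.indicator_of_mem, Set.mem_Iic]
      · simp [hG, ht, Set.indicator_of_notMem, Set.mem_Iic]
    rw [h1, setIntegral_indicator measurableSet_Iic]
    have h2 : Ioc α β ∩ Iic x = Ioc α x := by
      rw [Set.Ioc_inter_Iic, min_eq_right hx.2]
    rw [h2, MeasureTheory.integral_const_mul, intervalIntegral.integral_of_le hx.1.le]
  -- identify RHS of swap
  have hR : (∫ t, ∫ x, G x t ∂μ ∂μ) = ∫ t in α..β, (f β - f t) * φ t := by
    rw [intervalIntegral.integral_of_le hαβ]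
    apply setIntegral_congr_fun measurableSet_Ioc
    intro t ht
    show (∫ x, G x t ∂μ) = (f β - f t) * φ t
    have h1 : (∫ x, G x t ∂μ) = ∫ x in Ioc α β, (Ici t).indicator (fun x => f' x * φ t) x := by
      apply setIntegral_congr_fun measurableSet_Ioc
      intro x _
      by_cases hxt : t ≤ x
      · simp [hG, hxt, Set.indicator_of_mem, Set.mem_Ici]
      · simp [hG, hxt, Set.indicator_of_notMem, Set.mem_Ici]
    rw [h1, setIntegral_indicator measurableSet_Ici]
    have h2 : Ioc α β ∩ Ici t = Icc t β := by
      ext x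
      simp only [Set.mem_inter_iff, Set.mem_Ioc, Set.mem_Ici, Set.mem_Icc]
      constructor
      · rintro ⟨⟨_, hxb⟩, htx⟩; exact ⟨htx, hxb⟩
      · rintro ⟨htx, hxb⟩; exact ⟨⟨lt_of_lt_of_le ht.1 htx, hxb⟩, htx⟩
    rw [h2, MeasureTheory.integral_Icc_eq_integral_Ioc]
    have h3 : (∫ x in Ioc t β, f' x * φ t) = (∫ x in Ioc t β, f' x) * φ t := by
      rw [MeasureTheory.integral_mul_const]
    rw [h3, ← intervalIntegral.integral_of_le ht.2]
    have h4 : (∫ x in t..β, f' x) = f β - f t :=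
      intervalIntegral.integral_eq_sub_of_hasDerivAt (fun x _ => hf x)
        (hf'.intervalIntegrable _ _)
    rw [h4]
  obtain ⟨Cf, hCf⟩ := (isCompact_Icc (a := α) (b := β)).exists_bound_of_continuousOn
    hfc.continuousOn
  have hfφ : IntervalIntegrable (fun t => f t * φ t) volume α β := by
    rw [intervalIntegrable_iff_integrableOn_Ioc_of_le hαβ]
    apply Integrable.bdd_mul (c := Cf) hφint hfc.aestronglyMeasurable.restrict
    rw [hμ, ae_restrict_iff' measurableSet_Ioc]
    exact Filter.Eventually.of_forall (fun t ht => hCf t (Set.Ioc_subset_Icc_self ht))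
  have hprim_cont : Continuous fun x => ∫ t in α..x, φ t :=
    intervalIntegral.continuous_primitive (fun x y => loc_ii hφ x y) α
  have hint1 : IntervalIntegrable (fun x => f' x * g' α) volume α β :=
    (hf'.mul continuous_const).intervalIntegrable _ _
  have hint2 : IntervalIntegrable (fun x => f' x * ∫ t in α..x, φ t) volume α β :=
    (hf'.mul hprim_cont).intervalIntegrable _ _
  have hsplit : (∫ x in α..β, f' x * g' x)
      = (∫ x in α..β, f' x * g' α) + ∫ x in α..β, f' x * ∫ t in α..x, φ t := by
    rw [← intervalIntegral.integral_add hint1 hint2]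
    apply intervalIntegral.integral_congr
    intro x _
    show f' x * g' x = f' x * g' α + f' x * ∫ t in α..x, φ t
    rw [hrep x]; ring
  have hFTC : (∫ x in α..β, f' x) = f β - f α :=
    intervalIntegral.integral_eq_sub_of_hasDerivAt (fun x _ => hf x)
      (hf'.intervalIntegrable _ _)
  have h5 : (∫ x in α..β, f' x * g' α) = (f β - f α) * g' α := by
    rw [intervalIntegral.integral_mul_const, hFTC]
  have hT2 : (∫ x in α..β, f' x * ∫ t in α..x, φ t) = ∫ t in α..β, (f β - f t) * φ t := by
    rw [← hT, ← hR, hswap]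
  have h6 : (∫ t in α..β, (f β - f t) * φ t)
      = f β * (∫ t in α..β, φ t) - ∫ t in α..β, f t * φ t := by
    rw [← intervalIntegral.integral_const_mul, ← intervalIntegral.integral_sub
      ((loc_ii hφ α β).const_mul (f β)) hfφ]
    apply intervalIntegral.integral_congr
    intro x _
    show (f β - f x) * φ x = f β * φ x - f x * φ x
    ring
  have hg'β : g' β = g' α + ∫ t in α..β, φ t := hrep β
  rw [hsplit, h5, hT2, h6, hg'β]
  ring

lemma aux_match {χ χ' E E' : ℝ → ℂ} {p : ℝ} {s : Set ℝ} (hs : IsOpen s)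
    (hl : (nhdsWithin p s).NeBot)
    (hχ : ∀ x, HasDerivAt χ (χ' x) x) (hχ' : Continuous χ')
    (hE : ∀ x, HasDerivAt E (E' x) x) (hE' : Continuous E')
    (heq : ∀ x ∈ s, χ x = E x) : χ p = E p ∧ χ' p = E' p := by
  haveI := hl
  have hχc : Continuous χ := by
    rw [continuous_iff_continuousAt]; exact fun x => (hχ x).continuousAt
  have hEc : Continuous E := by
    rw [continuous_iff_continuousAt]; exact fun x => (hE x).continuousAt
  have hmem : s ∈ nhdsWithin p s := self_mem_nhdsWithin
  have hev : χ =ᶠ[nhdsWithin p s] E := Filter.eventuallyEq_of_mem hmem heq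
  constructor
  · have t1 : Tendsto χ (nhdsWithin p s) (nhds (χ p)) :=
      (hχc.tendsto p).mono_left nhdsWithin_le_nhds
    have t2 : Tendsto E (nhdsWithin p s) (nhds (χ p)) := t1.congr' hev
    have t3 : Tendsto E (nhdsWithin p s) (nhds (E p)) :=
      (hEc.tendsto p).mono_left nhdsWithin_le_nhds
    exact tendsto_nhds_unique t2 t3
  · have heq' : ∀ x ∈ s, χ' x = E' x := by
      intro x hx
      have hev2 : E =ᶠ[nhds x] χ :=
        Filter.eventuallyEq_of_mem (hs.mem_nhds hx) (fun y hy => (heq y hy).symm)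
      have h1 : HasDerivAt E (χ' x) x := (hχ x).congr_of_eventuallyEq hev2
      exact (h1.unique (hE x))
    have hev3 : χ' =ᶠ[nhdsWithin p s] E' := Filter.eventuallyEq_of_mem hmem heq'
    have t1 : Tendsto χ' (nhdsWithin p s) (nhds (χ' p)) :=
      (hχ'.tendsto p).mono_left nhdsWithin_le_nhds
    have t2 : Tendsto E' (nhdsWithin p s) (nhds (χ' p)) := t1.congr' hev3
    have t3 : Tendsto E' (nhdsWithin p s) (nhds (E' p)) :=
      (hE'.tendsto p).mono_left nhdsWithin_le_nhds
    exact tendsto_nhds_unique t2 t3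

lemma aux_expderiv {k h : ℝ} (x : ℝ) :
    HasDerivAt (fun y : ℝ => Complex.exp (Complex.I * k * y / h))
      (Complex.exp (Complex.I * k * x / h) * (Complex.I * k / h)) x := by
  have h1 : HasDerivAt (fun y : ℝ => (y : ℂ)) 1 x := by
    simpa using (hasDerivAt_id x).ofReal_comp
  have h2 := (h1.const_mul (Complex.I * (k:ℂ))).div_const (h:ℂ)
  simp only [mul_one] at h2
  have h3 : (fun y : ℝ => Complex.I * (k:ℂ) * (y:ℂ) / (h:ℂ))
      = fun y : ℝ => Complex.I * (k:ℂ) * (y:ℂ) / (h:ℂ) := rfl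
  exact h2.cexp

lemma aux_expderiv_neg {k h : ℝ} (x : ℝ) :
    HasDerivAt (fun y : ℝ => Complex.exp (-(Complex.I * k * y / h)))
      (Complex.exp (-(Complex.I * k * x / h)) * (-(Complex.I * k / h))) x := by
  have h1 : HasDerivAt (fun y : ℝ => (y : ℂ)) 1 x := by
    simpa using (hasDerivAt_id x).ofReal_comp
  have h2 := ((h1.const_mul (Complex.I * (k:ℂ))).div_const (h:ℂ)).neg
  simp only [mul_one] at h2
  exact h2.cexp


lemma aux_wronskian {χp χp' χp'' χm χm' χm'' : ℝ → ℂ} {V : ℝ → ℝ} {h k : ℝ}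
    {α β : ℝ} (hαβ : α ≤ β) (hh : h ≠ 0)
    (hp : ∀ x, HasDerivAt χp (χp' x) x) (hp' : Continuous χp')
    (hp'' : LocallyIntegrable χp'' volume)
    (hpI : ∀ x : ℝ, χp' x = χp' 0 + ∫ t in (0:ℝ)..x, χp'' t)
    (hEp : ∀ᵐ x : ℝ ∂volume, -(h:ℂ)^2 * χp'' x + (V x : ℂ) * χp x = (k:ℂ)^2 * χp x)
    (hm : ∀ x, HasDerivAt χm (χm' x) x) (hm' : Continuous χm')
    (hm'' : LocallyIntegrable χm'' volume)
    (hmI : ∀ x : ℝ, χm' x = χm' 0 + ∫ t in (0:ℝ)..x, χm'' t)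
    (hEm : ∀ᵐ x : ℝ ∂volume, -(h:ℂ)^2 * χm'' x + (V x : ℂ) * χm x = (k:ℂ)^2 * χm x) :
    χp β * χm' β - χp' β * χm β = χp α * χm' α - χp' α * χm α := by
  have A1 := aux_parts hαβ hp hp' hm'' hmI
  have A2 := aux_parts hαβ hm hm' hp'' hpI
  have hcomm : (∫ x in α..β, χp' x * χm' x) = ∫ x in α..β, χm' x * χp' x := by
    apply intervalIntegral.integral_congr
    intro x _
    show χp' x * χm' x = χm' x * χp' x
    ring
  have hc2 : ((h:ℂ))^2 ≠ 0 := pow_ne_zero _ (Complex.ofReal_ne_zero.mpr hh)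
  have hzero : (∫ x in α..β, χp x * χm'' x) = ∫ x in α..β, χm x * χp'' x := by
    apply intervalIntegral.integral_congr_ae
    filter_upwards [hEp, hEm] with x e1 e2 _
    apply mul_left_cancel₀ hc2
    linear_combination χp x * (-e2) - χm x * (-e1)
  rw [A1, A2] at hcomm
  linear_combination hcomm + hzero

lemma aux_sq {χ χ'' : ℝ → ℂ} {V : ℝ → ℝ} {h k M α β : ℝ} (hαβ : α ≤ β) (hh : 0 < h)
    (hχ : Continuous χ) (hloc : LocallyIntegrable χ'' volume)
    (hVb : ∀ x, |V x| ≤ M)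
    (hE : ∀ᵐ x : ℝ ∂volume, -(h:ℂ)^2 * χ'' x + (V x : ℂ) * χ x = (k:ℂ)^2 * χ x) :
    IntervalIntegrable (fun x => ‖χ'' x‖^2) volume α β ∧
    (∫ x in α..β, ‖χ'' x‖^2) ≤ ((M + k^2)/h^2)^2 * ∫ x in α..β, ‖χ x‖^2 := by
  have hpt : ∀ᵐ x : ℝ ∂volume, ‖χ'' x‖ ≤ (M + k^2)/h^2 * ‖χ x‖ := by
    filter_upwards [hE] with x e
    have e' : ((h:ℂ))^2 * χ'' x = ((V x - k^2 : ℝ) : ℂ) * χ x := by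
      push_cast; linear_combination -e
    have hn : h^2 * ‖χ'' x‖ = |V x - k^2| * ‖χ x‖ := by
      have := congrArg norm e'
      rwa [norm_mul, norm_mul, norm_pow, Complex.norm_real, Real.norm_eq_abs,
        abs_of_pos hh, Complex.norm_real, Real.norm_eq_abs] at this
    have hb : |V x - k^2| ≤ M + k^2 := by
      have h1 : |V x - k^2| ≤ |V x| + |k^2| := abs_sub _ _
      have h2 : |k^2| = k^2 := abs_of_nonneg (sq_nonneg k)
      have := hVb x
      linarith
    rw [div_mul_eq_mul_div, le_div_iff₀ (by positivity : (0:ℝ) < h^2)]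
    calc ‖χ'' x‖ * h^2 = h^2 * ‖χ'' x‖ := by ring
      _ = |V x - k^2| * ‖χ x‖ := hn
      _ ≤ (M + k^2) * ‖χ x‖ := by
          apply mul_le_mul_of_nonneg_right hb (norm_nonneg _)
  have hpt2 : ∀ᵐ x : ℝ ∂volume, ‖χ'' x‖^2 ≤ ((M + k^2)/h^2)^2 * ‖χ x‖^2 := by
    filter_upwards [hpt] with x e
    have := pow_le_pow_left₀ (norm_nonneg (χ'' x)) e 2
    rwa [mul_pow] at this
  have hmeas : AEStronglyMeasurable (fun x => ‖χ'' x‖^2) volume :=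
    ((hloc.aestronglyMeasurable.norm.aemeasurable).pow_const 2).aestronglyMeasurable
  have hgc : Continuous fun x => ((M + k^2)/h^2)^2 * ‖χ x‖^2 :=
    continuous_const.mul (hχ.norm.pow 2)
  have hi : IntervalIntegrable (fun x => ‖χ'' x‖^2) volume α β := by
    rw [intervalIntegrable_iff_integrableOn_Ioc_of_le hαβ]
    apply Integrable.mono' (hgc.integrableOn_Ioc) hmeas.restrict
    apply ae_restrict_of_ae
    filter_upwards [hpt2] with x e
    rwa [Real.norm_of_nonneg (sq_nonneg _)]
  refine ⟨hi, ?_⟩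
  have := intervalIntegral.integral_mono_ae hαβ hi (hgc.intervalIntegrable _ _) hpt2
  rwa [intervalIntegral.integral_const_mul] at this

set_option maxHeartbeats 1600000 in
/-- Wronskian bound: there exist `h₀, C > 0`, depending only on `a`, `b`, `c` and the
`L^∞` bound `M` of `V`, such that for `h ∈ (0,h₀]`, `k ∈ Ω_c(V)` and Jost solutions
`χ₊`, `χ₋` with Wronskian `w^h(k)`,
`|w^h(k)| ≤ C h^{−3/2} (1 + |k|) ‖χ±‖_{H^{1,h}(a,b)}`. -/
theorem stmt_11 (a b c M : ℝ) (hab : a < b) (hc : 0 < c) :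
    ∃ h₀ > 0, ∃ C > 0,
      ∀ V : ℝ → ℝ, Measurable V → (∀ x, |V x| ≤ M) →
      Function.support V ⊆ Set.Icc a b →
      ∀ h ∈ Set.Ioc (0:ℝ) h₀, ∀ k ∈ Omega a b c V,
      ∀ χp χp' χp'' χm χm' χm'' : ℝ → ℂ,
        (∀ x, HasDerivAt χp (χp' x) x) →
        Continuous χp' →
        LocallyIntegrable χp'' volume →
        (∀ x : ℝ, χp' x = χp' 0 + ∫ t in (0:ℝ)..x, χp'' t) →
        (∀ᵐ x : ℝ ∂volume, -(h:ℂ)^2 * χp'' x + (V x : ℂ) * χp x = (k:ℂ)^2 * χp x) →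
        (∀ x : ℝ, b < x → χp x = Complex.exp (Complex.I * k * x / h)) →
        (∀ x, HasDerivAt χm (χm' x) x) →
        Continuous χm' →
        LocallyIntegrable χm'' volume →
        (∀ x : ℝ, χm' x = χm' 0 + ∫ t in (0:ℝ)..x, χm'' t) →
        (∀ᵐ x : ℝ ∂volume, -(h:ℂ)^2 * χm'' x + (V x : ℂ) * χm x = (k:ℂ)^2 * χm x) →
        (∀ x : ℝ, x < a → χm x = Complex.exp (-(Complex.I * k * x / h))) →
        (‖χp a * χm' a - χp' a * χm a‖ ≤
            C * h ^ (-(3:ℝ)/2) * (1 + |k|) *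
              Real.sqrt ((∫ x in a..b, ‖χp x‖^2) + ∫ x in a..b, h^2 * ‖χp' x‖^2)) ∧
        (‖χp a * χm' a - χp' a * χm a‖ ≤
            C * h ^ (-(3:ℝ)/2) * (1 + |k|) *
              Real.sqrt ((∫ x in a..b, ‖χm x‖^2) + ∫ x in a..b, h^2 * ‖χm' x‖^2)) := by
  refine ⟨b - a, by linarith, 4 * |M| + 4, by positivity, ?_⟩
  intro V hVmeas hVb hVsupp h hmem k hk χp χp' χp'' χm χm' χm'' hp hp' hp''
    hpI hEp hpJ hm hm' hm'' hmI hEm hmJ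
  obtain ⟨hpos, hle⟩ := hmem
  have hab' : a ≤ b := hab.le
  have hM0 : 0 ≤ M := le_trans (abs_nonneg _) (hVb 0)
  -- k² ≤ M
  have hk2 : k ^ 2 ≤ M := by
    have hne : volume.restrict (Set.Icc a b) ≠ 0 := by
      rw [← Measure.measure_univ_ne_zero, Measure.restrict_apply_univ, Real.volume_Icc]
      exact (ENNReal.ofReal_pos.mpr (by linarith)).ne'
    haveI hbot : (ae (volume.restrict (Set.Icc a b))).NeBot := ae_neBot.mpr hne
    have h1 : essInf V (volume.restrict (Set.Icc a b)) ≤ M := by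
      apply Filter.liminf_le_of_frequently_le
      · exact Filter.Eventually.frequently
          (Filter.Eventually.of_forall fun x => (abs_le.mp (hVb x)).2)
      · exact Filter.isBoundedUnder_of ⟨-M, fun x => (abs_le.mp (hVb x)).1⟩
    have hk' : c < essInf V (volume.restrict (Set.Icc a b)) - k ^ 2 := hk
    linarith
  have hχpc : Continuous χp := by
    rw [continuous_iff_continuousAt]; exact fun x => (hp x).continuousAt
  have hχmc : Continuous χm := by
    rw [continuous_iff_continuousAt]; exact fun x => (hm x).continuousAt
  -- representation formulas
  have hrepP : ∀ x : ℝ, χp x = χp a + ∫ t in a..x, χp' t := by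
    intro x
    have hftc := intervalIntegral.integral_eq_sub_of_hasDerivAt
      (f := χp) (f' := χp') (a := a) (b := x) (fun t _ => hp t) (hp'.intervalIntegrable _ _)
    linear_combination -hftc
  have hrepM : ∀ x : ℝ, χm x = χm a + ∫ t in a..x, χm' t := by
    intro x
    have hftc := intervalIntegral.integral_eq_sub_of_hasDerivAt
      (f := χm) (f' := χm') (a := a) (b := x) (fun t _ => hm t) (hm'.intervalIntegrable _ _)
    linear_combination -hftc
  have hrepP' : ∀ x : ℝ, χp' x = χp' a + ∫ t in a..x, χp'' t := by
    intro x
    have hadd := intervalIntegral.integral_add_adjacent_intervals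
      (loc_ii hp'' 0 a) (loc_ii hp'' a x)
    rw [hpI x, hpI a, ← hadd]; ring
  have hrepM' : ∀ x : ℝ, χm' x = χm' a + ∫ t in a..x, χm'' t := by
    intro x
    have hadd := intervalIntegral.integral_add_adjacent_intervals
      (loc_ii hm'' 0 a) (loc_ii hm'' a x)
    rw [hmI x, hmI a, ← hadd]; ring
  -- boundary values
  have hEc : Continuous fun x : ℝ => Complex.exp (Complex.I * k * x / h) :=
    Complex.continuous_exp.comp
      (((continuous_const.mul Complex.continuous_ofReal).div_const _))
  have hE'c : Continuous fun x : ℝ =>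
      Complex.exp (Complex.I * k * x / h) * (Complex.I * k / h) :=
    hEc.mul continuous_const
  have hFc : Continuous fun x : ℝ => Complex.exp (-(Complex.I * k * x / h)) :=
    Complex.continuous_exp.comp
      (((continuous_const.mul Complex.continuous_ofReal).div_const _).neg)
  have hF'c : Continuous fun x : ℝ =>
      Complex.exp (-(Complex.I * k * x / h)) * (-(Complex.I * k / h)) :=
    hFc.mul continuous_const
  have hmatchP := aux_match isOpen_Ioi (p := b) inferInstance hp hp'
    (fun x => aux_expderiv x) hE'c (fun x hx => hpJ x hx)
  have hmatchM := aux_match isOpen_Iio (p := a) inferInstance hm hm'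
    (fun x => aux_expderiv_neg x) hF'c (fun x hx => hmJ x hx)
  have hnormexp : ∀ x : ℝ, ‖Complex.exp (Complex.I * k * x / h)‖ = 1 := by
    intro x
    have hx : Complex.I * (k:ℂ) * (x:ℂ) / (h:ℂ) = ((k * x / h : ℝ) : ℂ) * Complex.I := by
      push_cast; ring
    rw [hx, Complex.norm_exp_ofReal_mul_I]
  have hnormexp' : ∀ x : ℝ, ‖Complex.exp (-(Complex.I * k * x / h))‖ = 1 := by
    intro x
    have hx : -(Complex.I * (k:ℂ) * (x:ℂ) / (h:ℂ)) = ((-(k * x / h) : ℝ) : ℂ) * Complex.I := by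
      push_cast; ring
    rw [hx, Complex.norm_exp_ofReal_mul_I]
  have hnormc : ‖Complex.I * (k:ℂ) / (h:ℂ)‖ = |k| / h := by
    simp [abs_of_pos hpos]
  have npb : ‖χp b‖ = 1 := by rw [hmatchP.1]; exact hnormexp b
  have np'b : ‖χp' b‖ = |k| / h := by
    rw [hmatchP.2, norm_mul, hnormexp b, one_mul, hnormc]
  have nma : ‖χm a‖ = 1 := by rw [hmatchM.1]; exact hnormexp' a
  have nm'a : ‖χm' a‖ = |k| / h := by
    rw [hmatchM.2, norm_mul, hnormexp' a, one_mul, norm_neg, hnormc]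
  -- Wronskian constancy
  have hW := aux_wronskian hab' hpos.ne' hp hp' hp'' hpI hEp hm hm' hm'' hmI hEm
  -- common quantities
  set s := Real.sqrt h with hsdef
  have hs : 0 < s := Real.sqrt_pos.mpr hpos
  have hss : s * s = h := Real.mul_self_sqrt hpos.le
  have hrpow : h ^ (-(3:ℝ)/2) = (h * s)⁻¹ := by
    rw [show (-(3:ℝ)/2) = -((3:ℝ)/2) by ring, Real.rpow_neg hpos.le]
    congr 1
    rw [show ((3:ℝ)/2) = 1 + (1/2:ℝ) by norm_num, Real.rpow_add hpos, Real.rpow_one,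
      ← Real.sqrt_eq_rpow, hsdef]
  have habsM : |M| = M := abs_of_nonneg hM0
  have hhs0 : (0:ℝ) < h * s := by positivity
  constructor
  · -- first inequality : χp norm
    set P := ∫ x in a..b, ‖χp x‖ ^ 2 with hPdef
    set Qt := ∫ x in a..b, h ^ 2 * ‖χp' x‖ ^ 2 with hQtdef
    set Q' := ∫ x in a..b, ‖χp' x‖ ^ 2 with hQ'def
    have hQt : Qt = h ^ 2 * Q' := by
      rw [hQtdef, hQ'def, intervalIntegral.integral_const_mul]
    have hP0 : 0 ≤ P := intervalIntegral.integral_nonneg hab' (fun u _ => by positivity)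
    have hQ'0 : 0 ≤ Q' := intervalIntegral.integral_nonneg hab' (fun u _ => by positivity)
    have hQt0 : 0 ≤ Qt := by rw [hQt]; positivity
    set N := Real.sqrt (P + Qt) with hNdef
    have hN0 : 0 ≤ N := Real.sqrt_nonneg _
    have hPN : Real.sqrt P ≤ N := Real.sqrt_le_sqrt (by linarith)
    have hQN : Real.sqrt Qt ≤ N := Real.sqrt_le_sqrt (by linarith)
    have hsqQt : Real.sqrt Qt = h * Real.sqrt Q' := by
      rw [hQt, Real.sqrt_mul (sq_nonneg h), Real.sqrt_sq hpos.le]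
    have T1 : ‖χp a‖ * s ≤ Real.sqrt P + h * Real.sqrt Q' :=
      aux_trace_left hpos (by linarith) hχpc (hp'.locallyIntegrable)
        ((hp'.norm.pow 2).intervalIntegrable _ _) hrepP
    have T1' : ‖χp a‖ * s ≤ Real.sqrt P + Real.sqrt Qt := by rw [hsqQt]; exact T1
    obtain ⟨hRint, hRle⟩ := aux_sq (α := a) (β := b) hab' hpos hχpc hp'' hVb hEp
    set R := ∫ x in a..b, ‖χp'' x‖ ^ 2 with hRdef
    have hR0 : 0 ≤ R := intervalIntegral.integral_nonneg hab' (fun u _ => by positivity)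
    have hRs : Real.sqrt R ≤ (M + k ^ 2) / h ^ 2 * Real.sqrt P := by
      have h1 := Real.sqrt_le_sqrt hRle
      rwa [Real.sqrt_mul (sq_nonneg _), Real.sqrt_sq (by positivity)] at h1
    have T2 : ‖χp' a‖ * s ≤ Real.sqrt Q' + h * Real.sqrt R :=
      aux_trace_left hpos (by linarith) hp' hp'' hRint hrepP'
    have T2' : ‖χp' a‖ * (h * s) ≤ Real.sqrt Qt + (M + k ^ 2) * Real.sqrt P := by
      have hmul := mul_le_mul_of_nonneg_left T2 hpos.le
      have e1 : h * (h * Real.sqrt R) ≤ (M + k ^ 2) * Real.sqrt P := by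
        have e2 : h ^ 2 * ((M + k ^ 2) / h ^ 2 * Real.sqrt P) = (M + k ^ 2) * Real.sqrt P := by
          field_simp
        calc h * (h * Real.sqrt R) = h ^ 2 * Real.sqrt R := by ring
          _ ≤ h ^ 2 * ((M + k ^ 2) / h ^ 2 * Real.sqrt P) :=
              mul_le_mul_of_nonneg_left hRs (by positivity)
          _ = (M + k ^ 2) * Real.sqrt P := e2
      rw [hsqQt]
      linarith [hmul, e1]
    -- final assembly
    rw [hrpow, habsM]
    have hgoal_eq : (4 * M + 4) * (h * s)⁻¹ * (1 + |k|) * N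
        = ((4 * M + 4) * (1 + |k|) * N) / (h * s) := by
      rw [div_eq_mul_inv]; ring
    rw [hgoal_eq, le_div_iff₀ hhs0]
    have bound : ‖χp a * χm' a - χp' a * χm a‖ ≤ ‖χp a‖ * (|k| / h) + ‖χp' a‖ := by
      calc ‖χp a * χm' a - χp' a * χm a‖ ≤ ‖χp a * χm' a‖ + ‖χp' a * χm a‖ :=
            norm_sub_le _ _
        _ = ‖χp a‖ * ‖χm' a‖ + ‖χp' a‖ * ‖χm a‖ := by rw [norm_mul, norm_mul]
        _ = ‖χp a‖ * (|k| / h) + ‖χp' a‖ := by rw [nm'a, nma, mul_one]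
    have hA := mul_le_mul_of_nonneg_right bound hhs0.le
    have e4 : (‖χp a‖ * (|k| / h) + ‖χp' a‖) * (h * s)
        = (‖χp a‖ * s) * |k| + ‖χp' a‖ * (h * s) := by
      field_simp
    rw [e4] at hA
    have hB : (‖χp a‖ * s) * |k| ≤ (Real.sqrt P + Real.sqrt Qt) * |k| :=
      mul_le_mul_of_nonneg_right T1' (abs_nonneg k)
    have hf1 : Real.sqrt P * |k| ≤ N * |k| :=
      mul_le_mul_of_nonneg_right hPN (abs_nonneg k)
    have hf2 : Real.sqrt Qt * |k| ≤ N * |k| :=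
      mul_le_mul_of_nonneg_right hQN (abs_nonneg k)
    have hf3 : k ^ 2 * Real.sqrt P ≤ M * Real.sqrt P :=
      mul_le_mul_of_nonneg_right hk2 (Real.sqrt_nonneg _)
    have hf4 : M * Real.sqrt P ≤ M * N := mul_le_mul_of_nonneg_left hPN hM0
    have hf5 : 0 ≤ M * (N * |k|) := by positivity
    have hf6 : 0 ≤ N * |k| := by positivity
    have hMN0 : 0 ≤ M * N := mul_nonneg hM0 hN0
    linarith [hA, hB, T2', hf1, hf2, hQN, hf3, hf4, hf5, hf6, hN0, hMN0]
  · -- second inequality : χm norm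
    set P := ∫ x in a..b, ‖χm x‖ ^ 2 with hPdef
    set Qt := ∫ x in a..b, h ^ 2 * ‖χm' x‖ ^ 2 with hQtdef
    set Q' := ∫ x in a..b, ‖χm' x‖ ^ 2 with hQ'def
    have hQt : Qt = h ^ 2 * Q' := by
      rw [hQtdef, hQ'def, intervalIntegral.integral_const_mul]
    have hP0 : 0 ≤ P := intervalIntegral.integral_nonneg hab' (fun u _ => by positivity)
    have hQ'0 : 0 ≤ Q' := intervalIntegral.integral_nonneg hab' (fun u _ => by positivity)
    have hQt0 : 0 ≤ Qt := by rw [hQt]; positivity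
    set N := Real.sqrt (P + Qt) with hNdef
    have hN0 : 0 ≤ N := Real.sqrt_nonneg _
    have hPN : Real.sqrt P ≤ N := Real.sqrt_le_sqrt (by linarith)
    have hQN : Real.sqrt Qt ≤ N := Real.sqrt_le_sqrt (by linarith)
    have hsqQt : Real.sqrt Qt = h * Real.sqrt Q' := by
      rw [hQt, Real.sqrt_mul (sq_nonneg h), Real.sqrt_sq hpos.le]
    have T3 : ‖χm b‖ * s ≤ Real.sqrt P + h * Real.sqrt Q' :=
      aux_trace_right hpos (by linarith) hχmc (hm'.locallyIntegrable)
        ((hm'.norm.pow 2).intervalIntegrable _ _) hrepM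
    have T3' : ‖χm b‖ * s ≤ Real.sqrt P + Real.sqrt Qt := by rw [hsqQt]; exact T3
    obtain ⟨hRint, hRle⟩ := aux_sq (α := a) (β := b) hab' hpos hχmc hm'' hVb hEm
    set R := ∫ x in a..b, ‖χm'' x‖ ^ 2 with hRdef
    have hR0 : 0 ≤ R := intervalIntegral.integral_nonneg hab' (fun u _ => by positivity)
    have hRs : Real.sqrt R ≤ (M + k ^ 2) / h ^ 2 * Real.sqrt P := by
      have h1 := Real.sqrt_le_sqrt hRle
      rwa [Real.sqrt_mul (sq_nonneg _), Real.sqrt_sq (by positivity)] at h1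
    have T4 : ‖χm' b‖ * s ≤ Real.sqrt Q' + h * Real.sqrt R :=
      aux_trace_right hpos (by linarith) hm' hm'' hRint hrepM'
    have T4' : ‖χm' b‖ * (h * s) ≤ Real.sqrt Qt + (M + k ^ 2) * Real.sqrt P := by
      have hmul := mul_le_mul_of_nonneg_left T4 hpos.le
      have e1 : h * (h * Real.sqrt R) ≤ (M + k ^ 2) * Real.sqrt P := by
        have e2 : h ^ 2 * ((M + k ^ 2) / h ^ 2 * Real.sqrt P) = (M + k ^ 2) * Real.sqrt P := by
          field_simp
        calc h * (h * Real.sqrt R) = h ^ 2 * Real.sqrt R := by ring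
          _ ≤ h ^ 2 * ((M + k ^ 2) / h ^ 2 * Real.sqrt P) :=
              mul_le_mul_of_nonneg_left hRs (by positivity)
          _ = (M + k ^ 2) * Real.sqrt P := e2
      rw [hsqQt]
      linarith [hmul, e1]
    rw [hrpow, habsM]
    have hgoal_eq : (4 * M + 4) * (h * s)⁻¹ * (1 + |k|) * N
        = ((4 * M + 4) * (1 + |k|) * N) / (h * s) := by
      rw [div_eq_mul_inv]; ring
    rw [hgoal_eq, le_div_iff₀ hhs0]
    have bound : ‖χp a * χm' a - χp' a * χm a‖ ≤ ‖χm' b‖ + ‖χm b‖ * (|k| / h) := by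
      rw [← hW]
      calc ‖χp b * χm' b - χp' b * χm b‖ ≤ ‖χp b * χm' b‖ + ‖χp' b * χm b‖ :=
            norm_sub_le _ _
        _ = ‖χp b‖ * ‖χm' b‖ + ‖χp' b‖ * ‖χm b‖ := by rw [norm_mul, norm_mul]
        _ = ‖χm' b‖ + ‖χm b‖ * (|k| / h) := by rw [npb, np'b, one_mul]; ring
    have hA := mul_le_mul_of_nonneg_right bound hhs0.le
    have e4 : (‖χm' b‖ + ‖χm b‖ * (|k| / h)) * (h * s)
        = ‖χm' b‖ * (h * s) + (‖χm b‖ * s) * |k| := by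
      field_simp
    rw [e4] at hA
    have hB : (‖χm b‖ * s) * |k| ≤ (Real.sqrt P + Real.sqrt Qt) * |k| :=
      mul_le_mul_of_nonneg_right T3' (abs_nonneg k)
    have hf1 : Real.sqrt P * |k| ≤ N * |k| :=
      mul_le_mul_of_nonneg_right hPN (abs_nonneg k)
    have hf2 : Real.sqrt Qt * |k| ≤ N * |k| :=
      mul_le_mul_of_nonneg_right hQN (abs_nonneg k)
    have hf3 : k ^ 2 * Real.sqrt P ≤ M * Real.sqrt P :=
      mul_le_mul_of_nonneg_right hk2 (Real.sqrt_nonneg _)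
    have hf4 : M * Real.sqrt P ≤ M * N := mul_le_mul_of_nonneg_left hPN hM0
    have hf5 : 0 ≤ M * (N * |k|) := by positivity
    have hf6 : 0 ≤ N * |k| := by positivity
    have hMN0 : 0 ≤ M * N := mul_nonneg hM0 hN0
    linarith [hA, hB, T4', hf1, hf2, hQN, hf3, hf4, hf5, hf6, hN0, hMN0]
end
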